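/- arXiv:2406.19714 — 3 statements merged into one kernel-verified Lean document; each statement's English description precedes it below -/
import Mathlib

section
/- Any set of pairwise apart states in an observation tree for a complete Mealy machine M has cardinality at most the number of states of M. -/
open scoped Classical

/-- A partial Mealy machine over a global symbol type `A`, with its own input
alphabet `inp ⊆ A`; transitions and outputs are partial with the same domain,
and are undefined outside the alphabet. -/
structure PMealy (A O : Type) where
  Q : Type
  init : Q
  inp : Set A
  tr : Q → A → Option Q
  out : Q → A → Option O
  dom : ∀ q i, (tr q i).isSome ↔ (out q i).isSome
  supp : ∀ q i, i ∉ inp → tr q i = none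

namespace PMealy

variable {A O : Type}

/-- Extended partial transition function on input sequences. -/
def trs (M : PMealy A O) : M.Q → List A → Option M.Q
  | q, [] => some q
  | q, i :: w => (M.tr q i).bind fun q' => M.trs q' w

/-- Extended partial output function on input sequences. -/
def outs (M : PMealy A O) : M.Q → List A → Option (List O)
  | _, [] => some []
  | q, i :: w =>
      (M.out q i).bind fun o =>
        ((M.tr q i).bind fun q' => M.outs q' w).map fun os => o :: os

/-- States `p` and `q` match: outputs agree on all sequences over the common
alphabet on which both extended transition functions are defined. -/
def Matches (M1 M2 : PMealy A O) (p : M1.Q) (q : M2.Q) : Prop :=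
  ∀ σ : List A, (∀ i ∈ σ, i ∈ M1.inp ∩ M2.inp) →
    (M1.trs p σ).isSome → (M2.trs q σ).isSome →
    M1.outs p σ = M2.outs q σ

/-- Apartness: the negation of matching. -/
def Apart (M1 M2 : PMealy A O) (p : M1.Q) (q : M2.Q) : Prop :=
  ¬ Matches M1 M2 p q

/-- `σ` is a separating sequence witnessing `p # q`. -/
def SepSeq (M1 M2 : PMealy A O) (σ : List A) (p : M1.Q) (q : M2.Q) : Prop :=
  (∀ i ∈ σ, i ∈ M1.inp ∩ M2.inp) ∧
    (M1.trs p σ).isSome ∧ (M2.trs q σ).isSome ∧ M1.outs p σ ≠ M2.outs q σ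

/-- Total apartness: apart, or some sequence over the common alphabet is
defined from exactly one of the two states. -/
def TotalApart (M1 M2 : PMealy A O) (p : M1.Q) (q : M2.Q) : Prop :=
  Apart M1 M2 p q ∨
    ∃ σ : List A, (∀ i ∈ σ, i ∈ M1.inp ∩ M2.inp) ∧
      Xor' ((M1.trs p σ).isSome = true) ((M2.trs q σ).isSome = true)

end PMealy

/-- A complete Mealy machine. -/
structure Mealy (A O : Type) where
  Q : Type
  init : Q
  tr : Q → A → Q
  out : Q → A → O

namespace Mealy

variable {A O : Type}

/-- Extended transition function. -/
def trs (M : Mealy A O) : M.Q → List A → M.Q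
  | q, [] => q
  | q, i :: w => M.trs (M.tr q i) w

/-- Extended output function. -/
def outs (M : Mealy A O) : M.Q → List A → List O
  | _, [] => []
  | q, i :: w => M.out q i :: M.outs (M.tr q i) w

/-- View a complete Mealy machine as a partial one (alphabet = all of `A`). -/
def toP (M : Mealy A O) : PMealy A O where
  Q := M.Q
  init := M.init
  inp := Set.univ
  tr := fun q i => some (M.tr q i)
  out := fun q i => some (M.out q i)
  dom := by intro q i; simp
  supp := by intro q i h; exact absurd (Set.mem_univ i) h

end Mealy

/-- A tree-shaped partial Mealy machine (tree-ness is the predicate `IsTree`). -/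
structure PTree (A O : Type) where
  Q : Type
  root : Q
  tr : Q → A → Option Q
  out : Q → A → Option O
  dom : ∀ q i, (tr q i).isSome ↔ (out q i).isSome

namespace PTree

variable {A O : Type}

def trs (T : PTree A O) : T.Q → List A → Option T.Q
  | q, [] => some q
  | q, i :: w => (T.tr q i).bind fun q' => T.trs q' w

def outs (T : PTree A O) : T.Q → List A → Option (List O)
  | _, [] => some []
  | q, i :: w =>
      (T.out q i).bind fun o =>
        ((T.tr q i).bind fun q' => T.outs q' w).map fun os => o :: os

/-- Every state is reached from the root by a unique access sequence. -/
def IsTree (T : PTree A O) : Prop :=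
  ∀ q : T.Q, ∃! σ : List A, T.trs T.root σ = some q

/-- View a tree as a partial Mealy machine over the full alphabet. -/
def toP (T : PTree A O) : PMealy A O where
  Q := T.Q
  init := T.root
  inp := Set.univ
  tr := T.tr
  out := T.out
  dom := T.dom
  supp := by intro q i h; exact absurd (Set.mem_univ i) h

/-- The prefix-suffix pair `(w, i)` is a "matching pair" for tree state `q` and
reference state `p`: the single output after running `w` agrees. -/
def matchPair (T : PTree A O) (R : Mealy A O) (q : T.Q) (p : R.Q)
    (wi : List A × A) : Prop :=
  ((T.trs q wi.1).bind fun q' => T.out q' wi.2) =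
    some (R.out (R.trs p wi.1) wi.2)

/-- Matching degree of tree state `q` against reference state `p`, relative to
the set `W` of defined prefix-suffix pairs of `q`. -/
noncomputable def mdeg (T : PTree A O) (R : Mealy A O) (q : T.Q) (p : R.Q)
    (W : Finset (List A × A)) : ℚ :=
  ((W.filter (T.matchPair R q p)).card : ℚ) / (W.card : ℚ)

end PTree

/-- An observation tree for the complete Mealy machine `M`: a tree-shaped
partial Mealy machine together with a functional simulation `f` into `M`. -/
structure ObsTree {A O : Type} (M : Mealy A O) where
  Q : Type
  root : Q
  tr : Q → A → Option Q
  out : Q → A → Option O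
  dom : ∀ q i, (tr q i).isSome ↔ (out q i).isSome
  f : Q → M.Q
  f_root : f root = M.init
  f_tr : ∀ q i q', tr q i = some q' → f q' = M.tr (f q) i
  f_out : ∀ q i o, out q i = some o → o = M.out (f q) i

namespace ObsTree

variable {A O : Type} {M : Mealy A O}

def trs (T : ObsTree M) : T.Q → List A → Option T.Q
  | q, [] => some q
  | q, i :: w => (T.tr q i).bind fun q' => T.trs q' w

def outs (T : ObsTree M) : T.Q → List A → Option (List O)
  | _, [] => some []
  | q, i :: w =>
      (T.out q i).bind fun o =>
        ((T.tr q i).bind fun q' => T.outs q' w).map fun os => o :: os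

/-- Every state is reached from the root by a unique access sequence. -/
def IsTree (T : ObsTree M) : Prop :=
  ∀ q : T.Q, ∃! σ : List A, T.trs T.root σ = some q

/-- Apartness of two tree states: some input sequence is defined from both and
yields different output sequences. -/
def Apart (T : ObsTree M) (p q : T.Q) : Prop :=
  ∃ σ : List A, (T.trs p σ).isSome ∧ (T.trs q σ).isSome ∧
    T.outs p σ ≠ T.outs q σ

end ObsTree

namespace ObsTree

variable {A O : Type} {M : Mealy A O}

theorem outs_eq_some_of_trs_isSome (T : ObsTree M) {q : T.Q} {σ : List A}
    (h : (T.trs q σ).isSome) : T.outs q σ = some (M.outs (T.f q) σ) := by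
  induction σ generalizing q with
  | nil => rfl
  | cons i w ih =>
    obtain ⟨q', hq'⟩ : ∃ q', T.tr q i = some q' := by
      cases htr : T.tr q i <;> simp_all [trs]
    obtain ⟨o, ho⟩ := Option.isSome_iff_exists.mp ((T.dom q i).mp (by simp [hq']))
    have hw : (T.trs q' w).isSome := by simpa [trs, hq'] using h
    simp [outs, Mealy.outs, hq', ho, ih hw, T.f_tr q i q' hq', T.f_out q i o ho]

theorem f_ne_of_apart (T : ObsTree M) {p q : T.Q} (h : T.Apart p q) : T.f p ≠ T.f q := by
  obtain ⟨σ, hp, hq, hne⟩ := h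
  intro hf
  rw [outs_eq_some_of_trs_isSome T hp, outs_eq_some_of_trs_isSome T hq, hf] at hne
  exact hne rfl

end ObsTree

theorem stmt5_general {A O : Type} (M : Mealy A O) [Fintype M.Q] (T : ObsTree M)
    (S : Finset T.Q)
    (hS : ∀ p ∈ S, ∀ q ∈ S, p ≠ q → T.Apart p q) :
    S.card ≤ Fintype.card M.Q := by
  have hinj : Set.InjOn T.f S := fun p hp q hq hf =>
    by_contra fun hne => T.f_ne_of_apart (hS p hp q hq hne) hf
  simpa using Finset.card_le_card_of_injOn T.f (fun _ _ => Finset.mem_univ _) hinj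

/-- Any set of pairwise apart states in an observation tree for a (finite)
complete Mealy machine `M` has cardinality at most the number of states
of `M`. -/
theorem stmt5 {A O : Type} (M : Mealy A O) [Fintype M.Q] (T : ObsTree M)
    (hT : T.IsTree) [DecidableEq T.Q] (S : Finset T.Q)
    (hS : ∀ p ∈ S, ∀ q ∈ S, p ≠ q → T.Apart p q) :
    S.card ≤ Fintype.card M.Q :=
  stmt5_general M T S hS
end

section
/- Every finite complete Mealy machine admits a separating family: a collection of finite state identifiers {W_p} indexed by states such that for all states p, q with p # q there exists a sequence σ ∈ W_p ∩ W_q with σ ⊢ p # q. -/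
open scoped Classical

theorem exists_finset_family_common_witness {Q α : Type*} [Fintype Q] [DecidableEq α]
    (R : Q → Q → α → Prop) :
    ∃ W : Q → Finset α, ∀ p q, (∃ a, R p q a) → ∃ a ∈ W p ∩ W q, R p q a := by
  rcases isEmpty_or_nonempty α with _ | _
  · exact ⟨fun _ => ∅, fun _ _ ⟨a, _⟩ => isEmptyElim a⟩
  choose! w hw using fun p q (h : ∃ a, R p q a) => h
  refine ⟨fun p => Finset.univ.image (w p) ∪ Finset.univ.image (w · p),
    fun p q hpq => ⟨w p q, ?_, hw p q hpq⟩⟩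
  simp

/-- Every finite complete Mealy machine admits a separating family: finite
state identifiers such that any two apart states share a common separating
sequence in the intersection of their identifiers. -/
theorem stmt9 {A O : Type} [DecidableEq A] (M : Mealy A O) [Fintype M.Q] :
    ∃ W : M.Q → Finset (List A),
      ∀ p q : M.Q, (∃ σ : List A, M.outs p σ ≠ M.outs q σ) →
        ∃ σ ∈ W p ∩ W q, M.outs p σ ≠ M.outs q σ := by
  exact exists_finset_family_common_witness fun p q σ => M.outs p σ ≠ M.outs q σ
end

section
/- Promotion increases the norm: if T' extends T by moving an isolated frontier state r into the basis (B' = B ∪ {r}), then |B'|·(|B'|+1) + |{(q,r') ∈ B'×F' : q # r'}| ≥ |B|·(|B|+1) + |{(q,r') ∈ B×F : q # r'}| + 2, where F' is the new frontier (which loses r and gains at most nothing from this step). -/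
open scoped Classical

/-! Promotion adds `2|B| + 2` to `|B|(|B|+1)`, while the only basis-frontier apartness pairs it
can lose are the at most `|B|` pairs `(q, r)` with `q ∈ B`. -/

section ProductCount

variable {α β : Type*}

theorem finite_setOf_mem_mem_and (s : Finset α) (t : Finset β) (R : α → β → Prop) :
    {x : α × β | x.1 ∈ s ∧ x.2 ∈ t ∧ R x.1 x.2}.Finite :=
  (s.finite_toSet.prod t.finite_toSet).subset fun _ hx => ⟨hx.1, hx.2.1⟩

theorem ncard_setOf_mem_mem_and_le_add_card [DecidableEq β] (R : α → β → Prop)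
    {s s' : Finset α} {t t' : Finset β} (b : β) (hs : s ⊆ s') (ht : t.erase b ⊆ t') :
    {x : α × β | x.1 ∈ s ∧ x.2 ∈ t ∧ R x.1 x.2}.ncard ≤
      {x : α × β | x.1 ∈ s' ∧ x.2 ∈ t' ∧ R x.1 x.2}.ncard + s.card := by
  set S' := {x : α × β | x.1 ∈ s' ∧ x.2 ∈ t' ∧ R x.1 x.2}
  have hsub : {x : α × β | x.1 ∈ s ∧ x.2 ∈ t ∧ R x.1 x.2} ⊆ S' ∪ (s : Set α) ×ˢ {b} := by
    rintro ⟨a, c⟩ ⟨ha, hc, hR⟩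
    by_cases hcb : c = b
    · exact Or.inr ⟨ha, hcb⟩
    · exact Or.inl ⟨hs ha, ht (Finset.mem_erase.2 ⟨hcb, hc⟩), hR⟩
  calc _ ≤ (S' ∪ (s : Set α) ×ˢ {b}).ncard :=
        Set.ncard_le_ncard hsub ((finite_setOf_mem_mem_and s' t' R).union
          (s.finite_toSet.prod (Set.finite_singleton b)))
    _ ≤ S'.ncard + ((s : Set α) ×ˢ {b}).ncard := Set.ncard_union_le _ _
    _ = S'.ncard + s.card := by
      rw [Set.ncard_prod, Set.ncard_singleton, Set.ncard_coe_finset, mul_one]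

end ProductCount

theorem stmt19_general {A O : Type} (M : Mealy A O) (T : ObsTree M)
    [DecidableEq T.Q] (B F : Finset T.Q) (r : T.Q)
    (hrB : r ∉ B)
    (B' F' : Finset T.Q) (hB' : B' = insert r B)
    (hF' : F.erase r ⊆ F') :
    B.card * (B.card + 1) +
        Set.ncard {x : T.Q × T.Q | x.1 ∈ B ∧ x.2 ∈ F ∧ T.Apart x.1 x.2} + 2 ≤
      B'.card * (B'.card + 1) +
        Set.ncard {x : T.Q × T.Q | x.1 ∈ B' ∧ x.2 ∈ F' ∧ T.Apart x.1 x.2} := by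
  have hcard : B'.card = B.card + 1 := by rw [hB', Finset.card_insert_of_notMem hrB]
  have hloss := ncard_setOf_mem_mem_and_le_add_card T.Apart r
    (hB' ▸ Finset.subset_insert r B) hF'
  rw [hcard]
  nlinarith [hloss]

/-- Promotion increases the norm: moving an isolated frontier state `r` into
the basis increases `|B|(|B|+1)` plus the number of apart basis-frontier
pairs by at least 2. -/
theorem stmt19 {A O : Type} (M : Mealy A O) (T : ObsTree M) (hT : T.IsTree)
    [DecidableEq T.Q] (B F : Finset T.Q) (r : T.Q) (hrF : r ∈ F)
    (hrB : r ∉ B) (hiso : ∀ q ∈ B, T.Apart r q)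
    (B' F' : Finset T.Q) (hB' : B' = insert r B)
    (hF' : F.erase r ⊆ F') (hrF' : r ∉ F') :
    B.card * (B.card + 1) +
        Set.ncard {x : T.Q × T.Q | x.1 ∈ B ∧ x.2 ∈ F ∧ T.Apart x.1 x.2} + 2 ≤
      B'.card * (B'.card + 1) +
        Set.ncard {x : T.Q × T.Q | x.1 ∈ B' ∧ x.2 ∈ F' ∧ T.Apart x.1 x.2} :=
  stmt19_general M T B F r hrB B' F' hB' hF'
end
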